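/- Let N ≥ 1 and let F_χ(z) = Σ_{d≥0} C(-χ + (N+1)d, d) z^d and G(z) = Σ_{d≥1} (N/d) C((N+1)(d-1), d-1) z^d as formal power series over ℚ, for each integer χ. Then G(z) · F_χ(z) = F_χ(z) - F_{χ+N}(z). -/

import Mathlib

/-- Generalized binomial coefficient `C(a,k) ∈ ℚ`. -/
noncomputable def gchoose (a : ℤ) (k : ℕ) : ℚ :=
  (∏ i ∈ Finset.range k, ((a : ℚ) - (i : ℚ))) / (k.factorial : ℚ)

/-- `F_χ(z) = Σ_{d≥0} C(-χ+(N+1)d, d) z^d`. -/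
noncomputable def Fs (N : ℕ) (χ : ℤ) : PowerSeries ℚ :=
  PowerSeries.mk fun d => gchoose (-χ + ((N : ℤ) + 1) * d) d

/-- `G(z) = Σ_{d≥1} (N/d) C((N+1)(d-1), d-1) z^d`. -/
noncomputable def Gs (N : ℕ) : PowerSeries ℚ :=
  PowerSeries.mk fun d =>
    if d = 0 then 0 else (N : ℚ) / (d : ℚ) * (((N + 1) * (d - 1)).choose (d - 1) : ℚ)

/-!
Under `z = t / (1 + t) ^ (N + 1)` one has `F_χ = (1 + t) ^ (1 - χ) / (1 - N t)` and
`G = 1 - (1 + t) ^ (-N)`, so the identity says `F_χ ⋅ (1 + t) ^ (-N) = F_{χ+N}`. We avoid the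
substitution: `B_χ := F_χ - (N + 1) z F_{χ-N}` plays the role of `(1 + t) ^ (-χ)`. Pascal's rule
gives `S_χ - S_{χ+1} = z S_{χ-N}` for `S = F` and `S = B`, absorption gives `B_0 = 1` and
`G = 1 - B_N`, and a family satisfying this recursion that vanishes at `χ = 0` vanishes
identically (induct on the coefficient index). Applied to `F_{χ'} B_χ - F_{χ+χ'}` this yields
`F_{χ'} B_χ = F_{χ+χ'}`.
-/

open PowerSeries

theorem gchoose_eq_choose (a : ℤ) (k : ℕ) : gchoose a k = Ring.choose (a : ℚ) k := by
  rw [Ring.choose_eq_smul, gchoose, ← Polynomial.eval₂_smulOneHom_eq_smeval,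
    ← descPochhammer_eval_eq_prod_range, ← descPochhammer_map (algebraMap ℤ ℚ),
    Polynomial.eval_map, smul_eq_mul, div_eq_inv_mul, Subsingleton.elim (algebraMap ℤ ℚ)]

theorem Ring.succ_nsmul_choose_succ {R : Type*} [Ring R] [BinomialRing R] (r : R) (k : ℕ) :
    (k + 1) • Ring.choose r (k + 1) = r * Ring.choose (r - 1) k := by
  simpa [Ring.choose_one_right] using Ring.choose_smul_choose r (Nat.le_add_left 1 k)

theorem coeff_Fs (N : ℕ) (χ : ℤ) (d : ℕ) :
    coeff d (Fs N χ) = Ring.choose ((N + 1) * d - χ : ℚ) d := by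
  rw [Fs, coeff_mk, gchoose_eq_choose]
  push_cast
  rw [neg_add_eq_sub]

theorem constantCoeff_Fs (N : ℕ) (χ : ℤ) : constantCoeff (Fs N χ) = 1 := by
  rw [← coeff_zero_eq_constantCoeff_apply, coeff_Fs, Nat.cast_zero, Ring.choose_zero_right]

theorem Fs_sub_Fs_add_one (N : ℕ) (χ : ℤ) :
    Fs N χ - Fs N (χ + 1) = X * Fs N (χ - N) := by
  ext (_ | d)
  · simp [constantCoeff_Fs]
  · have pascal := Ring.choose_succ_succ ((N + 1) * (d + 1) - (χ + 1) : ℚ) d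
    rw [map_sub, coeff_succ_X_mul, coeff_Fs, coeff_Fs, coeff_Fs, sub_eq_iff_eq_add]
    push_cast
    convert pascal using 3 <;> ring

noncomputable def Bs (N : ℕ) (χ : ℤ) : PowerSeries ℚ :=
  Fs N χ - C ((N : ℚ) + 1) * X * Fs N (χ - N)

theorem Bs_sub_Bs_add_one (N : ℕ) (χ : ℤ) :
    Bs N χ - Bs N (χ + 1) = X * Bs N (χ - N) := by
  have hχ := Fs_sub_Fs_add_one N χ
  have hχN := Fs_sub_Fs_add_one N (χ - N)
  rw [show χ - N + 1 = χ + 1 - N by ring] at hχN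
  simp only [Bs]
  linear_combination hχ - C ((N : ℚ) + 1) * X * hχN

theorem Bs_zero (N : ℕ) : Bs N 0 = 1 := by
  ext (_ | n)
  · simp [Bs, constantCoeff_Fs]
  · have habsorb := Ring.succ_nsmul_choose_succ ((N + 1) * (n + 1) : ℚ) n
    rw [nsmul_eq_mul, Nat.cast_add_one] at habsorb
    rw [Bs, map_sub, mul_assoc, coeff_C_mul, coeff_succ_X_mul, coeff_Fs, coeff_Fs, coeff_one,
      if_neg n.succ_ne_zero, sub_eq_zero]
    apply mul_left_cancel₀ (n.cast_add_one_ne_zero : (n : ℚ) + 1 ≠ 0)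
    rw [show (N + 1) * ((n + 1 : ℕ) : ℚ) - ((0 : ℤ) : ℚ) = (N + 1) * (n + 1) by
        push_cast; ring,
      show (N + 1) * (n : ℚ) - ((0 - N : ℤ) : ℚ) = (N + 1) * (n + 1) - 1 by push_cast; ring]
    linear_combination habsorb

theorem eq_zero_of_sub_add_one_eq_X_mul {R : Type*} [Ring R] {S : ℤ → R⟦X⟧}
    (f : ℤ → ℤ) (hS : ∀ ψ, S ψ - S (ψ + 1) = X * S (f ψ)) (h0 : S 0 = 0) (ψ : ℤ) :
    S ψ = 0 := by
  suffices ∀ d ψ, coeff d (S ψ) = 0 from ext fun d => (this d ψ).trans (map_zero _).symm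
  intro d
  induction d using Nat.strong_induction_on with
  | _ d ih =>
  have hX : ∀ ψ, coeff d (X * S (f ψ)) = 0 := by
    intro ψ
    rcases d with _ | d
    · exact coeff_zero_X_mul _
    · rw [coeff_succ_X_mul, ih d d.lt_succ_self]
  have periodic : Function.Periodic (fun ψ => coeff d (S ψ)) 1 := fun ψ => by
    rw [eq_comm, ← sub_eq_zero, ← map_sub, hS, hX]
  intro ψ
  simpa [h0] using periodic.int_mul_eq ψ

theorem Fs_mul_Bs (N : ℕ) (χ ψ : ℤ) : Fs N χ * Bs N ψ = Fs N (ψ + χ) := by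
  refine sub_eq_zero.mp <| eq_zero_of_sub_add_one_eq_X_mul
    (S := fun φ => Fs N χ * Bs N φ - Fs N (φ + χ)) (fun φ => φ - N) (fun φ => ?_)
    (by simp [Bs_zero]) ψ
  have hF := Fs_sub_Fs_add_one N (φ + χ)
  rw [show φ + χ + 1 = φ + 1 + χ by ring, show φ + χ - N = φ - N + χ by ring] at hF
  linear_combination Fs N χ * Bs_sub_Bs_add_one N φ - hF

theorem Gs_eq_one_sub_Bs (N : ℕ) : Gs N = 1 - Bs N N := by
  ext (_ | n)
  · simp [Gs, Bs, constantCoeff_Fs]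
  · have habsorb := Ring.succ_nsmul_choose_succ ((N + 1) * n + 1 : ℚ) n
    rw [nsmul_eq_mul, Nat.cast_add_one, add_sub_cancel_right] at habsorb
    rw [Gs, Bs, map_sub, map_sub, mul_assoc, coeff_C_mul, coeff_succ_X_mul, coeff_Fs, coeff_Fs,
      coeff_one, coeff_mk, if_neg n.succ_ne_zero, if_neg n.succ_ne_zero, Nat.add_sub_cancel]
    rw [show (N + 1) * ((n + 1 : ℕ) : ℚ) - ((N : ℤ) : ℚ) = (N + 1) * n + 1 by
        push_cast; ring,
      show (N + 1) * (n : ℚ) - ((N - N : ℤ) : ℚ) = (N + 1) * n by push_cast; ring,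
      ← Ring.choose_natCast]
    push_cast
    rw [div_mul_eq_mul_div, div_eq_iff n.cast_add_one_ne_zero]
    linear_combination habsorb

theorem G_mul_F_general (N : ℕ) (χ : ℤ) :
    Gs N * Fs N χ = Fs N χ - Fs N (χ + N) := by
  rw [Gs_eq_one_sub_Bs, sub_mul, one_mul, mul_comm, Fs_mul_Bs, add_comm]

theorem G_mul_F (N : ℕ) (hN : 1 ≤ N) (χ : ℤ) :
    Gs N * Fs N χ = Fs N χ - Fs N (χ + N) :=
  G_mul_F_general N χ
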